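/- arXiv:2106.02072 — 2 statements merged into one kernel-verified Lean document; each statement's English description precedes it below -/
import Mathlib

section
/- Let G be a group, let n ≥ 2 be an integer, and let X = G^n. An element x = (g_1, …, g_n) ∈ X satisfies σ_X(x) = x for every automorphism σ of the free group F_n if and only if g_1 = g_2 = … = g_n = e, where e is the identity element of G. -/
/-- The word map `σ_X : X → X` associated to an endomorphism `σ` of the free
group `F_n`, where `X = G^n`. -/
def wordMap {G : Type*} [Group G] {n : ℕ}
    (σ : FreeGroup (Fin n) →* FreeGroup (Fin n)) (x : Fin n → G) : Fin n → G :=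
  fun i => FreeGroup.lift x (σ (FreeGroup.of i))

/-! Every coordinate `g_i` is killed by a single Nielsen transvection: for `j ≠ i` (which exists
as `n ≥ 2`), the automorphism `f_j ↦ f_j f_i` fixing the other generators has word map sending
`g_j` to `g_j g_i`, so a fixed tuple has `g_j g_i = g_j`, i.e. `g_i = e`. -/

namespace FreeGroup

variable {α : Type*} [DecidableEq α]

def transvectionHom (i j : α) (k : ℤ) : FreeGroup α →* FreeGroup α :=
  lift (Function.update of i (of i * of j ^ k))

theorem transvectionHom_of_self (i j : α) (k : ℤ) :
    transvectionHom i j k (of i) = of i * of j ^ k := by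
  simp [transvectionHom]

theorem transvectionHom_of_of_ne {i a : α} (j : α) (k : ℤ) (ha : a ≠ i) :
    transvectionHom i j k (of a) = of a := by
  simp [transvectionHom, ha]

theorem transvectionHom_neg_comp {i j : α} (hij : i ≠ j) (k : ℤ) :
    (transvectionHom i j (-k)).comp (transvectionHom i j k) = MonoidHom.id _ := by
  ext a
  by_cases ha : a = i
  · subst ha
    simp [transvectionHom_of_self, transvectionHom_of_of_ne _ _ hij.symm]
  · simp [transvectionHom_of_of_ne _ _ ha]

def transvection {i j : α} (hij : i ≠ j) : MulAut (FreeGroup α) :=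
  (transvectionHom i j 1).toMulEquiv (transvectionHom i j (-1))
    (transvectionHom_neg_comp hij 1) (by simpa using transvectionHom_neg_comp hij (-1))

theorem transvection_of_self {i j : α} (hij : i ≠ j) :
    transvection hij (of i) = of i * of j := by
  simp [transvection, MonoidHom.toMulEquiv, transvectionHom_of_self]

end FreeGroup

section WordMap

variable {G : Type*} [Group G] {n : ℕ}

theorem wordMap_one (σ : FreeGroup (Fin n) →* FreeGroup (Fin n)) :
    wordMap σ (1 : Fin n → G) = 1 := by
  have lift_one : FreeGroup.lift (1 : Fin n → G) = 1 := FreeGroup.ext_hom _ _ fun _ => by simp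
  ext i
  simp [wordMap, lift_one]

theorem wordMap_transvection_apply_self {i j : Fin n} (hij : i ≠ j) (x : Fin n → G) :
    wordMap (FreeGroup.transvection hij).toMonoidHom x i = x i * x j := by
  simp [wordMap, FreeGroup.transvection_of_self]

end WordMap

/-- For `n ≥ 2`, a tuple `x ∈ G^n` is fixed by the word maps of all
automorphisms of `F_n` if and only if all its components are the identity. -/
theorem fixed_by_all_aut_iff_one {G : Type*} [Group G] {n : ℕ} (hn : 2 ≤ n)
    (x : Fin n → G) :
    (∀ σ : MulAut (FreeGroup (Fin n)), wordMap σ.toMonoidHom x = x) ↔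
      ∀ i, x i = 1 := by
  constructor
  · intro hfix i
    have : Nontrivial (Fin n) := Fin.nontrivial_iff_two_le.mpr hn
    obtain ⟨j, hji⟩ := exists_ne i
    have hj : x j * x i = x j := by
      rw [← wordMap_transvection_apply_self hji, hfix]
    simpa using hj
  · intro hone σ
    obtain rfl : x = 1 := funext hone
    exact wordMap_one _
end

section
/- Let G be a noncommutative group in which the orders of elements are not bounded above (i.e., there is no positive integer N with g^N = e for all g ∈ G). Let s ∈ G be a noncentral element of finite order. Then there is no integer d such that s g s^{-1} = g^d for every g ∈ G. -/
/-- Let `G` be a noncommutative group whose element orders are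
not bounded above, and let `s ∈ G` be a noncentral element of finite order.
Then there is no integer `d` with `s g s⁻¹ = g ^ d` for every `g ∈ G`. -/
theorem no_conj_pow_identity {G : Type*} [Group G]
    (hnc : ¬ ∀ a b : G, a * b = b * a)
    (hunbdd : ¬ ∃ N : ℕ, 0 < N ∧ ∀ g : G, g ^ N = 1)
    (s : G) (hs : s ∉ Subgroup.center G)
    (hfin : ∃ r : ℕ, 0 < r ∧ s ^ r = 1) :
    ¬ ∃ d : ℤ, ∀ g : G, s * g * s⁻¹ = g ^ d := by
  rintro ⟨d, hd⟩
  obtain ⟨r, hr, hsr⟩ := hfin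
  have key : ∀ n : ℕ, ∀ g : G, s ^ n * g * (s ^ n)⁻¹ = g ^ (d ^ n) := by
    intro n
    induction n with
    | zero => intro g; simp
    | succ n ih =>
      intro g
      have h1 : s ^ (n + 1) * g * (s ^ (n + 1))⁻¹
          = s * (s ^ n * g * (s ^ n)⁻¹) * s⁻¹ := by
        group
      rw [h1, ih g, hd, ← zpow_mul, pow_succ]
  have hfix : ∀ g : G, g ^ (d ^ r) = g := by
    intro g
    have h := key r g
    rw [hsr] at h
    simpa using h.symm
  by_cases hdr : d ^ r = 1
  · rcases Int.isUnit_iff.mp (IsUnit.of_pow_eq_one hdr hr.ne') with h1 | h1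
    · apply hs
      rw [Subgroup.mem_center_iff]
      intro g
      have h := hd g
      rw [h1, zpow_one] at h
      exact (mul_inv_eq_iff_eq_mul.mp h).symm
    · apply hnc
      intro a b
      have ha := hd a; have hb := hd b; have hab := hd (a * b)
      rw [h1] at ha hb hab
      simp only [zpow_neg, zpow_one, mul_inv_rev] at ha hb hab
      have : s * (a * b) * s⁻¹ = (s * a * s⁻¹) * (s * b * s⁻¹) := by group
      rw [hab, ha, hb] at this
      have h2 : b⁻¹ * a⁻¹ = a⁻¹ * b⁻¹ := this
      have := congrArg (·⁻¹) h2
      simpa using this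
  · apply hunbdd
    refine ⟨(d ^ r - 1).natAbs, by omega, fun g => ?_⟩
    have hz : g ^ (d ^ r - 1) = 1 := by
      rw [zpow_sub, hfix g, zpow_one, mul_inv_cancel]
    rcases Int.natAbs_eq (d ^ r - 1) with he | he
    · rw [← zpow_natCast, ← he, hz]
    · have : g ^ (((d ^ r - 1).natAbs : ℤ)) = 1 := by
        rw [← neg_neg ((d ^ r - 1).natAbs : ℤ), ← he, zpow_neg, hz, inv_one]
      rwa [zpow_natCast] at this
end
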